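/- arXiv:2203.00311 — 12 statements merged into one kernel-verified Lean document; each statement's English description precedes it below -/
import Mathlib

section
/- In a symmetric Zinbiel algebra (an algebra satisfying both the left Zinbiel identity (xy)z = x(yz) + x(zy) and the right Zinbiel identity x(yz) = (xy)z + (yx)z), the product is bicommutative: (xy)z = (xz)y and x(yz) = y(xz) for all x, y, z. -/
theorem symmetric_zinbiel_bicommutative {A : Type*} [NonUnitalNonAssocRing A]
    (hL : ∀ x y z : A, (x * y) * z = x * (y * z) + x * (z * y))
    (hR : ∀ x y z : A, x * (y * z) = (x * y) * z + (y * x) * z) :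
    ∀ x y z : A, (x * y) * z = (x * z) * y ∧ x * (y * z) = y * (x * z) := by
  have key : ∀ x y z : A, (y * x) * z = -(x * (z * y)) := by
    intro x y z
    have h2 := hR x y z
    rw [hL x y z, add_assoc, left_eq_add] at h2
    exact eq_neg_of_add_eq_zero_right h2
  have S : ∀ x y z : A, (x * y) * z + (y * x) * z + (z * x) * y = 0 := by
    intro x y z
    rw [hL x y z, key x y z, key x z y]
    abel
  have F : ∀ x y z : A, (x * y) * z = (x * z) * y := by
    intro x y z
    have h1 := S y z x
    have h2 := S z y x
    have h3 : (x * y) * z - (x * z) * y =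
        ((y * z) * x + (z * y) * x + (x * y) * z) -
          ((z * y) * x + (y * z) * x + (x * z) * y) := by abel
    rw [h1, h2, sub_zero] at h3
    exact sub_eq_zero.mp h3
  intro x y z
  refine ⟨F x y z, ?_⟩
  have e1 : x * (y * z) = -((z * x) * y) := by rw [key x z y, neg_neg]
  have e2 : y * (x * z) = -((z * y) * x) := by rw [key y z x, neg_neg]
  rw [e1, e2, F z x y]
end

section
/- Every symmetric Zinbiel algebra is anti-flexible: the associator satisfies (x,y,z) = (z,y,x) for all x, y, z, where (x,y,z) = (xy)z - x(yz). -/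
theorem symmetric_zinbiel_antiflexible {A : Type*} [NonUnitalNonAssocRing A]
    (hL : ∀ x y z : A, (x * y) * z = x * (y * z) + x * (z * y))
    (hR : ∀ x y z : A, x * (y * z) = (x * y) * z + (y * x) * z) :
    ∀ x y z : A, (x * y) * z - x * (y * z) = (z * y) * x - z * (y * x) := by
  intro x y z
  rw [hL x y z, hL z y x, hR x z y, hR z x y]
  abel
end

section
/- In a symmetric Zinbiel algebra, (xy)z = -z(yx) for all x, y, z. -/
theorem symmetric_zinbiel_reverse_identity {A : Type*} [NonUnitalNonAssocRing A]
    (hL : ∀ x y z : A, (x * y) * z = x * (y * z) + x * (z * y))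
    (hR : ∀ x y z : A, x * (y * z) = (x * y) * z + (y * x) * z) :
    ∀ x y z : A, (x * y) * z = -(z * (y * x)) := by
  have K : ∀ a b c : A, a * (c * b) = -((b * a) * c) := by
    intro a b c
    have h2 := hR a b c
    rw [hL a b c, add_assoc] at h2
    exact eq_neg_of_add_eq_zero_left (left_eq_add.mp h2)
  intro x y z
  rw [K z x y, neg_neg, hL x y z, hL x z y, add_comm]
end

section
/- In a symmetric Zinbiel algebra over a field of characteristic not 2 or 3, every product of four elements vanishes; in particular ((xy)z)t = 0, (x(yz))t = 0, (xy)(zt) = 0, x((yz)t) = 0 and x(y(zt)) = 0 for all x, y, z, t. Hence every symmetric Zinbiel algebra with nonzero product is 2-step or 3-step nilpotent. -/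
theorem symmetric_zinbiel_products_of_four_vanish {K A : Type*} [Field K]
    [NonUnitalNonAssocRing A] [Module K A] [IsScalarTower K A A] [SMulCommClass K A A]
    (h2 : (2 : K) ≠ 0) (h3 : (3 : K) ≠ 0)
    (hL : ∀ x y z : A, (x * y) * z = x * (y * z) + x * (z * y))
    (hR : ∀ x y z : A, x * (y * z) = (x * y) * z + (y * x) * z) :
    ∀ x y z t : A, ((x * y) * z) * t = 0 ∧ (x * (y * z)) * t = 0 ∧
      (x * y) * (z * t) = 0 ∧ x * ((y * z) * t) = 0 ∧ x * (y * (z * t)) = 0 := by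
  have I : ∀ a b c : A, (a * b) * c = -(b * (c * a)) := by
    intro a b c
    have h1 := hR b a c
    have h2 := hL b a c
    linear_combination (norm := abel) -h1 - h2
  have I' : ∀ a b c : A, a * (b * c) = -((c * a) * b) := by
    intro a b c
    rw [I c a b, neg_neg]
  have II : ∀ a b c : A, (a * b) * c = -((c * a) * b) - ((b * a) * c) := by
    intro a b c
    rw [hL a b c, I' a b c, I' a c b]
    abel
  have III : ∀ a b c : A, (a * b) * c = (a * c) * b := by
    intro a b c
    have e1 := II b c a
    have e2 := II c b a
    linear_combination (norm := abel) e1 - e2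
  have key : ∀ a b c d : A, ((a * b) * c) * d = ((b * d) * a) * c + ((b * c) * a) * d := by
    intro a b c d
    rw [II (a * b) c d, I' d a b, I' c a b, neg_mul, neg_mul, neg_neg]
    abel
  have twoQ : ∀ a b c d : A, ((a * b) * c) * d = ((b * a) * c) * d + ((b * a) * c) * d := by
    intro a b c d
    rw [key a b c d, III b d a, III (b * a) d c, III b c a]
  have Q0 : ∀ a b c d : A, ((a * b) * c) * d = 0 := by
    intro a b c d
    have e1 := twoQ a b c d
    have e2 := twoQ b a c d
    have h3' : ((a * b) * c) * d + ((a * b) * c) * d + ((a * b) * c) * d = 0 := by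
      linear_combination (norm := abel) -e1 - e2 - e2
    have h4 : (3 : K) • (((a * b) * c) * d) = 0 := by
      rw [show (3 : K) = 1 + 1 + 1 by norm_num, add_smul, add_smul, one_smul]
      exact h3'
    have h5 : (((a * b) * c) * d) = (3 : K)⁻¹ • ((3 : K) • (((a * b) * c) * d)) := by
      rw [smul_smul, inv_mul_cancel₀ h3, one_smul]
    rw [h5, h4, smul_zero]
  intro x y z t
  refine ⟨Q0 x y z t, ?_, ?_, ?_, ?_⟩
  · rw [I' x y z, neg_mul, Q0, neg_zero]
  · rw [III x y (z * t), I' x z t, neg_mul, Q0, neg_zero]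
  · rw [I' x (y * z) t, III t x (y * z), I' t y z, neg_mul, neg_neg, Q0]
  · rw [I' x y (z * t), Q0, neg_zero]
end

section
/- In a symmetric Zinbiel algebra over a field of characteristic not 2 or 3, x^2·x = 0 and x·x^2 = 0 for every element x (so all cubes vanish). -/
theorem symmetric_zinbiel_cubes_vanish {K A : Type*} [Field K]
    [NonUnitalNonAssocRing A] [Module K A] [IsScalarTower K A A] [SMulCommClass K A A]
    (h2 : (2 : K) ≠ 0) (h3 : (3 : K) ≠ 0)
    (hL : ∀ x y z : A, (x * y) * z = x * (y * z) + x * (z * y))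
    (hR : ∀ x y z : A, x * (y * z) = (x * y) * z + (y * x) * z) :
    ∀ x : A, (x * x) * x = 0 ∧ x * (x * x) = 0 := by
  intro x
  have e1 : (x * x) * x = x * (x * x) + x * (x * x) := hL x x x
  have e2 : x * (x * x) = (x * x) * x + (x * x) * x := hR x x x
  set a := x * (x * x) with ha
  have h4 : a = a + a + (a + a) := by nth_rewrite 1 [e2]; rw [e1]
  have hsum : (3 : ℕ) • a = 0 := by
    have h0 := sub_eq_zero_of_eq h4.symm
    abel_nf at h0 ⊢
    exact h0
  have h3a : (3 : K) • a = 0 := by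
    rw [show (3 : K) = ((3 : ℕ) : K) by norm_num, Nat.cast_smul_eq_nsmul, hsum]
  have ha0 : a = 0 := by
    have := congrArg (fun y => (3 : K)⁻¹ • y) h3a
    simpa [smul_smul, inv_mul_cancel₀ h3] using this
  exact ⟨by rw [e1, ha0, add_zero], ha0⟩
end

section
/- In a symmetric Zinbiel algebra, z((tx)y) = 0 for all x, y, z, t (products where the innermost factor is a product of two elements, nested on the left inside two left multiplications, vanish). -/
theorem symmetric_zinbiel_nested_product_vanishes {K A : Type*} [Field K]
    [NonUnitalNonAssocRing A] [Module K A] [IsScalarTower K A A] [SMulCommClass K A A]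
    (h2 : (2 : K) ≠ 0)
    (hL : ∀ x y z : A, (x * y) * z = x * (y * z) + x * (z * y))
    (hR : ∀ x y z : A, x * (y * z) = (x * y) * z + (y * x) * z) :
    ∀ x y z t : A, z * ((t * x) * y) = 0 := by
  -- key : (a*b)*c = -(b*(c*a))
  have key : ∀ a b c : A, (a * b) * c = -(b * (c * a)) := by
    intro a b c
    linear_combination (norm := abel) - hR b a c - hL b a c
  -- swap : a*(b*c) = b*(a*c)
  have R : ∀ a b c : A, a * (b * c) + a * (c * b) + b * (c * a) = 0 := by
    intro a b c
    linear_combination (norm := abel) key a b c - hL a b c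
  have swap : ∀ a b c : A, a * (b * c) = b * (a * c) := by
    intro a b c
    linear_combination (norm := abel) R c a b - R c b a
  -- P : a(b(cd)) + a(b(dc)) + a(c(db)) = 0
  have P : ∀ a b c d : A, a * (b * (c * d)) + a * (b * (d * c)) + a * (c * (d * b)) = 0 := by
    intro a b c d
    have h := congrArg (a * ·) (R b c d)
    simpa [mul_add] using h
  -- Q : b(d(ac)) = a(b(cd)) - a(d(bc))   from the two expansions of (a*b)*(c*d)
  have Q : ∀ a b c d : A, b * (d * (a * c)) = a * (b * (c * d)) - a * (d * (b * c)) := by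
    intro a b c d
    have h1 : (a * b) * (c * d) = b * (d * (a * c)) := by
      rw [key a b (c * d), key c d a, mul_neg, neg_neg]
    have h2 : (a * b) * (c * d) = a * (b * (c * d)) - a * (d * (b * c)) := by
      rw [hL a b (c * d), key c d b, mul_neg, sub_eq_add_neg]
    rw [← h1, h2]
  have main : ∀ a b c d : A, a * (b * (c * d)) = 0 := by
    intro a b c d
    have E3 : a * (b * (c * d)) + a * (c * (d * b)) + b * (c * (d * a)) = 0 := by
      have h := P c a b d
      rw [swap c a (b * d), swap c a (d * b), swap c b (d * a), swap c b d] at h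
      exact h
    have E4 : a * (b * (d * c)) + a * (c * (d * b)) + b * (c * (d * a)) = 0 := by
      have h := P d a b c
      rw [swap d a (b * c), swap d a (c * b), swap d b (c * a), swap d b c, swap d c b,
        swap d c a] at h
      exact h
    have E5 : a * (b * (d * c)) = a * (b * (c * d)) - a * (b * (d * c)) := by
      have h := Q a b c d
      rw [swap d a c, swap b a (d * c), swap d b c] at h
      exact h
    linear_combination (norm := abel) E3 + E3 - E4 - E4 + E5
  intro x y z t
  rw [key t x y, mul_neg, main z x y t, neg_zero]
end

section
/- Let A be a quadratic left Zinbiel algebra, i.e. a left Zinbiel algebra equipped with a nondegenerate symmetric bilinear form B satisfying the invariance condition B(xy, z) = B(x, yz) for all x, y, z. Then A is also a right Zinbiel algebra, hence a symmetric Zinbiel algebra. -/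
theorem quadratic_left_zinbiel_is_symmetric {K A : Type*} [Field K]
    [NonUnitalNonAssocRing A] [Module K A] [IsScalarTower K A A] [SMulCommClass K A A]
    (B : LinearMap.BilinForm K A)
    (hsymm : ∀ x y : A, B x y = B y x)
    (hinv : ∀ x y z : A, B (x * y) z = B x (y * z))
    (hnd : ∀ x : A, (∀ y : A, B x y = 0) → x = 0)
    (hL : ∀ x y z : A, (x * y) * z = x * (y * z) + x * (z * y)) :
    ∀ x y z : A, x * (y * z) = (x * y) * z + (y * x) * z := by
  -- abbreviation for B (a*b) (c*d)
  have hR : ∀ a b c d : A, B (a * b) (c * d) = B (b * c) (d * a) + B (c * b) (d * a) := by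
    intro a b c d
    have h1 : B (a * b) (c * d) = B ((a * b) * c) d := (hinv (a * b) c d).symm
    have h2 : B (a * (b * c)) d = B (b * c) (d * a) := by
      rw [hsymm, ← hinv, hsymm]
    have h3 : B (a * (c * b)) d = B (c * b) (d * a) := by
      rw [hsymm, ← hinv, hsymm]
    rw [h1, hL, map_add, LinearMap.add_apply, h2, h3]
  have hsig : ∀ a b c d : A, B (a * b) (c * d) = B (c * d) (a * b) := fun a b c d =>
    hsymm _ _
  intro x y z
  apply eq_of_sub_eq_zero
  apply hnd
  intro w
  have e0 : B (x * (y * z) - ((x * y) * z + (y * x) * z)) w =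
      B (x * (y * z)) w - (B ((x * y) * z) w + B ((y * x) * z) w) := by
    rw [map_sub, map_add]
    simp [LinearMap.sub_apply, LinearMap.add_apply]
  rw [e0]
  have e1 : B (x * (y * z)) w = B (y * z) (w * x) := by
    rw [hsymm, ← hinv, hsymm]
  have e2 : B ((x * y) * z) w = B (x * y) (z * w) := hinv _ _ _
  have e3 : B ((y * x) * z) w = B (y * x) (z * w) := hinv _ _ _
  rw [e1, e2, e3]
  have key : B (y * z) (w * x) = B (x * y) (z * w) + B (y * x) (z * w) := by
    linear_combination (-1 : K) * hsig y x z w - hsig y x w z - hsig z y w x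
      - hR x y z w + hR x w z y + hR y x w z
  rw [key]
  ring
end

section
/- Every quadratic Zinbiel algebra over a field of characteristic zero is 2-step nilpotent: if a left Zinbiel algebra A carries a nondegenerate symmetric invariant bilinear form B (with B(xy,z) = B(x,yz)), then (xy)z = 0 and x(yz) = 0 for all x, y, z in A. -/
theorem quadratic_zinbiel_two_step_nilpotent {K A : Type*} [Field K] [CharZero K]
    [NonUnitalNonAssocRing A] [Module K A] [IsScalarTower K A A] [SMulCommClass K A A]
    (B : LinearMap.BilinForm K A)
    (hsymm : ∀ x y : A, B x y = B y x)
    (hinv : ∀ x y z : A, B (x * y) z = B x (y * z))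
    (hnd : ∀ x : A, (∀ y : A, B x y = 0) → x = 0)
    (hL : ∀ x y z : A, (x * y) * z = x * (y * z) + x * (z * y)) :
    ∀ x y z : A, (x * y) * z = 0 ∧ x * (y * z) = 0 := by
  -- Step 1: the identity  y(wz) + z(yw) + z(wy) = 0.
  have key : ∀ y z w : A, y * (w * z) + z * (y * w) + z * (w * y) = 0 := by
    intro y z w
    apply hnd
    intro x
    rw [hsymm]
    have e1 : B x ((y * z) * w) = B x (y * (z * w)) + B x (y * (w * z)) := by
      rw [hL]; simp
    have e2 : B x ((z * y) * w) = B x (z * (y * w)) + B x (z * (w * y)) := by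
      rw [hL]; simp
    have e3 : B x ((y * z) * w) = B (x * (y * z)) w := (hinv x (y * z) w).symm
    have e4 : B x ((z * y) * w) = B (x * (z * y)) w := (hinv x (z * y) w).symm
    have e5 : B (x * (y * z)) w + B (x * (z * y)) w = B ((x * y) * z) w := by
      rw [hL x y z]; simp
    have e6 : B ((x * y) * z) w = B x (y * (z * w)) := by
      rw [hinv, hinv]
    have goal' : B x (y * (w * z) + z * (y * w) + z * (w * y)) =
        B x (y * (w * z)) + B x (z * (y * w)) + B x (z * (w * y)) := by simp
    rw [goal']
    linear_combination -e1 - e2 + e3 + e4 + e5 + e6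
  -- Step 2: (z*y)*w = -(y*(w*z))
  have hP : ∀ y z w : A, (z * y) * w = -(y * (w * z)) := by
    intro y z w
    have h := key y z w
    rw [hL, eq_neg_iff_add_eq_zero, ← h]
    abel
  -- Step 3: left multiplications commute: y*(z*w) = z*(y*w)
  have hE : ∀ y z w : A, y * (z * w) = z * (y * w) := by
    intro y z w
    have h1 : (w * y) * z = -(y * (z * w)) := hP y w z
    have h2 : (w * z) * y = -(z * (y * w)) := hP z w y
    have h3 : (w * y) * z = w * (y * z) + w * (z * y) := hL w y z
    have h4 : (w * z) * y = w * (z * y) + w * (y * z) := hL w z y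
    have h5 : -(y * (z * w)) = -(z * (y * w)) := by
      rw [← h1, ← h2, h3, h4]; abel
    exact neg_inj.mp h5
  -- Step 4: B (x*y) (z*w) = 0 for all x y z w.
  have hf : ∀ x y z w : A, B (x * y) (z * w) = 0 := by
    have R2 : ∀ x y z w : A, B (x * y) (z * w) = B (x * z) (y * w) := by
      intro x y z w
      rw [hinv, hinv, hE y z w]
    have R3 : ∀ x y z w : A, B (x * y) (z * w) = -(B (w * y) (z * x)) := by
      intro x y z w
      have h1 : B (x * y) (z * w) = B ((x * y) * z) w := (hinv (x * y) z w).symm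
      have h2 : (x * y) * z = -(y * (z * x)) := hP y x z
      rw [h1, h2]
      have : B (-(y * (z * x))) w = -(B (y * (z * x)) w) := by simp
      rw [this, hsymm (y * (z * x)) w, ← hinv w y (z * x)]
    intro x y z w
    have c1 : B (x * y) (z * w) = B (w * y) (z * x) := by
      rw [hsymm (x * y) (z * w), R2 z w x y, hsymm (z * x) (w * y)]
    have c2 := R3 x y z w
    linear_combination (c1 + c2) / 2
  -- Step 5: conclude.
  have hz : ∀ x y z : A, x * (y * z) = 0 := by
    intro x y z
    apply hnd
    intro t
    rw [hsymm, ← hinv t x (y * z)]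
    exact hf t x y z
  intro x y z
  refine ⟨?_, hz x y z⟩
  rw [hL, hz, hz, add_zero]
end

section
/- An algebra lying in the intersection of the varieties of binary symmetric Zinbiel and binary symmetric Leibniz algebras satisfies the fully antisymmetric identities: (x1 x2)x3 = sgn(σ)·(x_{σ(1)} x_{σ(2)})x_{σ(3)} and x1(x2 x3) = sgn(σ)·x_{σ(1)}(x_{σ(2)} x_{σ(3)}) for every permutation σ of {1,2,3}. Conversely, any algebra satisfying x²y = 0, x(xy) = 0, yx² = 0 and (yx)x = 0 (equivalently, the above antisymmetry after linearization over a field of characteristic ≠ 2) lies in this intersection. -/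
private lemma aux_perm {A : Type*} [AddCommGroup A] (g : A → A → A → A)
    (h12 : ∀ a b c, g b a c = - g a b c) (h23 : ∀ a b c, g a c b = - g a b c) :
    ∀ (σ : Equiv.Perm (Fin 3)) (x : Fin 3 → A),
      g (x 0) (x 1) (x 2) = (Equiv.Perm.sign σ : ℤ) • g (x (σ 0)) (x (σ 1)) (x (σ 2)) := by
  have h13 : ∀ a b c, g c b a = - g a b c := by
    intro a b c; rw [h12, h23, h12, neg_neg]
  have hswap : ∀ (i j : Fin 3), i ≠ j → ∀ x : Fin 3 → A,
      g (x (Equiv.swap i j 0)) (x (Equiv.swap i j 1)) (x (Equiv.swap i j 2))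
        = - g (x 0) (x 1) (x 2) := by
    intro i j hij x
    fin_cases i <;> fin_cases j <;>
      simp only [Equiv.swap_apply_def] <;>
      first
        | exact absurd rfl hij
        | (norm_num; first | exact h12 _ _ _ | exact h13 _ _ _ | exact h23 _ _ _)
  have Q : ∀ (σ : Equiv.Perm (Fin 3)) (x : Fin 3 → A),
      g (x (σ 0)) (x (σ 1)) (x (σ 2)) = (Equiv.Perm.sign σ : ℤ) • g (x 0) (x 1) (x 2) := by
    intro σ
    refine Equiv.Perm.swap_induction_on σ ?_ ?_
    · intro x; simp
    · intro f i j hij IH x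
      have e : ∀ k : Fin 3, x ((Equiv.swap i j * f) k) = (x ∘ Equiv.swap i j) (f k) := by
        intro k; simp [Equiv.Perm.mul_apply]
      rw [e 0, e 1, e 2, IH (x ∘ Equiv.swap i j)]
      have hs := hswap i j hij x
      simp only [Function.comp]
      rw [hs, Equiv.Perm.sign_mul, Equiv.Perm.sign_swap hij]
      push_cast
      rw [neg_mul, one_mul, neg_smul, smul_neg]
  intro σ x
  rw [Q σ x, smul_smul]
  norm_cast
  rw [Int.units_mul_self]
  simp

private lemma aux_anti {A : Type*} [NonUnitalNonAssocRing A]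
    (z1 : ∀ x y : A, (x*x)*y = 0) (z2 : ∀ x y : A, x*(x*y) = 0)
    (z3 : ∀ x y : A, y*(x*x) = 0) (z4 : ∀ x y : A, (y*x)*x = 0) :
    (∀ a b c : A, (b*a)*c = -((a*b)*c)) ∧ (∀ a b c : A, (a*c)*b = -((a*b)*c)) ∧
    (∀ a b c : A, b*(a*c) = -(a*(b*c))) ∧ (∀ a b c : A, a*(c*b) = -(a*(b*c))) := by
  refine ⟨fun a b c => ?_, fun a b c => ?_, fun a b c => ?_, fun a b c => ?_⟩
  · have h := z1 (a+b) c
    simp only [add_mul, mul_add] at h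
    simp only [z1, zero_add, add_zero] at h
    first | exact eq_neg_of_add_eq_zero_left h | exact eq_neg_of_add_eq_zero_right h
  · have h := z4 (b+c) a
    simp only [add_mul, mul_add] at h
    simp only [z4, zero_add, add_zero] at h
    first | exact eq_neg_of_add_eq_zero_left h | exact eq_neg_of_add_eq_zero_right h
  · have h := z2 (a+b) c
    simp only [add_mul, mul_add] at h
    simp only [z2, zero_add, add_zero] at h
    first | exact eq_neg_of_add_eq_zero_left h | exact eq_neg_of_add_eq_zero_right h
  · have h := z3 (b+c) a
    simp only [add_mul, mul_add] at h
    simp only [z3, zero_add, add_zero] at h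
    first | exact eq_neg_of_add_eq_zero_left h | exact eq_neg_of_add_eq_zero_right h

theorem binary_symmetric_zinbiel_leibniz_intersection {K A : Type*} [Field K]
    [NonUnitalNonAssocRing A] [Module K A] [IsScalarTower K A A] [SMulCommClass K A A]
    (h2 : (2 : K) ≠ 0) :
    ((∀ x y : A, x * (y * x) = (x * y + y * x) * x ∧ x * (x * y) = 2 • ((x * x) * y) ∧
        (x * y) * x = x * (y * x + x * y) ∧ (y * x) * x = 2 • (y * (x * x))) →
     (∀ x y : A, (x * x) * y = 0 ∧ x * (y * x) = (x * y) * x + y * (x * x) ∧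
        x * (y * (x * y)) = (x * y) * (x * y) + y * (x * (x * y)) ∧ y * (x * x) = 0 ∧
        (x * y) * (x * y) = ((x * y) * x) * y + x * ((x * y) * y)) →
     (∀ (σ : Equiv.Perm (Fin 3)) (x : Fin 3 → A),
        (x 0 * x 1) * x 2 = (Equiv.Perm.sign σ : ℤ) • ((x (σ 0) * x (σ 1)) * x (σ 2)) ∧
        x 0 * (x 1 * x 2) = (Equiv.Perm.sign σ : ℤ) • (x (σ 0) * (x (σ 1) * x (σ 2))))) ∧
    ((∀ x y : A, (x * x) * y = 0 ∧ x * (x * y) = 0 ∧ y * (x * x) = 0 ∧ (y * x) * x = 0) →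
     ((∀ x y : A, x * (y * x) = (x * y + y * x) * x ∧ x * (x * y) = 2 • ((x * x) * y) ∧
        (x * y) * x = x * (y * x + x * y) ∧ (y * x) * x = 2 • (y * (x * x))) ∧
      (∀ x y : A, (x * x) * y = 0 ∧ x * (y * x) = (x * y) * x + y * (x * x) ∧
        x * (y * (x * y)) = (x * y) * (x * y) + y * (x * (x * y)) ∧ y * (x * x) = 0 ∧
        (x * y) * (x * y) = ((x * y) * x) * y + x * ((x * y) * y)))) := by
  constructor
  · intro hZ hL σ x
    have z1 : ∀ x y : A, (x*x)*y = 0 := fun x y => (hL x y).1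
    have z3 : ∀ x y : A, y*(x*x) = 0 := fun x y => (hL x y).2.2.2.1
    have z2 : ∀ x y : A, x*(x*y) = 0 := fun x y => by
      have h := (hZ x y).2.1; rw [z1, smul_zero] at h; exact h
    have z4 : ∀ x y : A, (y*x)*x = 0 := fun x y => by
      have h := (hZ x y).2.2.2; rw [z3, smul_zero] at h; exact h
    obtain ⟨hL12, hL23, hR12, hR23⟩ := aux_anti z1 z2 z3 z4
    exact ⟨aux_perm (fun a b c => (a*b)*c) hL12 hL23 σ x,
           aux_perm (fun a b c => a*(b*c)) hR12 hR23 σ x⟩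
  · intro hF
    have z1 : ∀ x y : A, (x*x)*y = 0 := fun x y => (hF x y).1
    have z2 : ∀ x y : A, x*(x*y) = 0 := fun x y => (hF x y).2.1
    have z3 : ∀ x y : A, y*(x*x) = 0 := fun x y => (hF x y).2.2.1
    have z4 : ∀ x y : A, (y*x)*x = 0 := fun x y => (hF x y).2.2.2
    obtain ⟨hL12, hL23, hR12, hR23⟩ := aux_anti z1 z2 z3 z4
    have p1 : ∀ x y : A, (x*y)*x = 0 := fun x y => by rw [hL12 y x x, z4, neg_zero]
    have p2 : ∀ x y : A, x*(y*x) = 0 := fun x y => by rw [hR23 x x y, z2, neg_zero]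
    have q5 : ∀ x y : A, (x*y)*(x*y) = 0 := fun x y => by
      rw [hR12 x (x*y) y, z4 y x, mul_zero, neg_zero]
    refine ⟨fun x y => ⟨?_, ?_, ?_, ?_⟩, fun x y => ⟨z1 x y, ?_, ?_, z3 x y, ?_⟩⟩
    · rw [p2, add_mul, p1, z4, add_zero]
    · rw [z2, z1, smul_zero]
    · rw [p1, mul_add, p2, z2, add_zero]
    · rw [z4, z3, smul_zero]
    · rw [p2, p1, z3, add_zero]
    · rw [hR12 y x (x*y)]
      simp [z2, q5, mul_zero]
    · rw [q5, p1, zero_mul, z4 y x, mul_zero, add_zero]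
end

section
/- Let A be a left Zinbiel algebra, V a vector space, and r, l : A → End(V) linear maps. The direct sum A ⊕ V with product (x+u)(y+v) = xy + l(x)v + r(y)u is a left Zinbiel algebra if and only if (r, l) is a left representation of A, i.e. l(xy) = l(x)l(y) + l(x)r(y), r(x)r(y) = r(xy) + r(yx), and l(x)l(y) = r(y)l(x) - l(x)r(y) for all x, y in A. -/
/-- The product on the semidirect sum `A ⊕ V`: `(x+u)(y+v) = xy + l(x)v + r(y)u`. -/
def semidirectMul {K A V : Type*} [Field K] [NonUnitalNonAssocRing A] [Module K A]
    [AddCommGroup V] [Module K V]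
    (l r : A →ₗ[K] Module.End K V) (p q : A × V) : A × V :=
  (p.1 * q.1, l p.1 q.2 + r q.1 p.2)

theorem semidirect_left_zinbiel_iff_representation {K A V : Type*} [Field K]
    [NonUnitalNonAssocRing A] [Module K A] [AddCommGroup V] [Module K V]
    (hL : ∀ x y z : A, (x * y) * z = x * (y * z) + x * (z * y))
    (l r : A →ₗ[K] Module.End K V) :
    (∀ p q s : A × V, semidirectMul l r (semidirectMul l r p q) s =
        semidirectMul l r p (semidirectMul l r q s) +
        semidirectMul l r p (semidirectMul l r s q)) ↔
    (∀ x y : A, l (x * y) = l x * l y + l x * r y ∧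
        r x * r y = r (x * y) + r (y * x) ∧
        l x * l y = r y * l x - l x * r y) := by
  constructor
  · intro h x y
    refine ⟨LinearMap.ext fun w => ?_, LinearMap.ext fun u => ?_, LinearMap.ext fun v => ?_⟩
    · have := congrArg Prod.snd (h (x, 0) (y, 0) (0, w))
      simpa [semidirectMul, Module.End.mul_apply] using this
    · have := congrArg Prod.snd (h (0, u) (y, 0) (x, 0))
      simp only [semidirectMul, map_zero, LinearMap.zero_apply, add_zero, zero_add,
        Module.End.mul_apply, LinearMap.add_apply, Prod.snd_add] at this ⊢
      rw [this]; abel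
    · have := congrArg Prod.snd (h (x, 0) (0, v) (y, 0))
      simp only [semidirectMul, map_zero, LinearMap.zero_apply, add_zero, zero_add,
        Module.End.mul_apply, LinearMap.sub_apply, Prod.snd_add, map_add] at this ⊢
      rw [this]; abel
  · intro h p q s
    obtain ⟨x, u⟩ := p; obtain ⟨y, v⟩ := q; obtain ⟨z, w⟩ := s
    have e1 := LinearMap.congr_fun (h x y).1 w
    have e2 := LinearMap.congr_fun (h z y).2.1 u
    have e3 := LinearMap.congr_fun (h x z).2.2 v
    simp only [Module.End.mul_apply, LinearMap.add_apply, LinearMap.sub_apply] at e1 e2 e3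
    simp only [semidirectMul, Prod.mk_add_mk, Prod.mk.injEq, map_add]
    exact ⟨hL x y z, by rw [e1, e2, e3]; abel⟩
end

section
/- Let (A, ·, B) be a quadratic symmetric Zinbiel algebra and δ an endomorphism of A. Define Ω(x,y) = B(δ(x), y). Then Ω is a scalar Zinbiel 2-cocycle of A (i.e. the central extension A ⊕ K with product (x+λ)(y+μ) = xy + Ω(x,y) is again a symmetric Zinbiel algebra) if and only if δ(xy) = δ(x)y + yδ(x) and δ(xy) = -xδ(y) for all x, y in A. -/
/-- The central extension product on `A ⊕ K`: `(x+λ)(y+μ) = xy + Ω(x,y)`. -/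
def centralExtMul {K A : Type*} [Field K] [NonUnitalNonAssocRing A] [Module K A]
    (Ω : A → A → K) (p q : A × K) : A × K :=
  (p.1 * q.1, Ω p.1 q.1)

theorem central_extension_cocycle_iff {K A : Type*} [Field K]
    [NonUnitalNonAssocRing A] [Module K A] [IsScalarTower K A A] [SMulCommClass K A A]
    (B : LinearMap.BilinForm K A)
    (hsymm : ∀ x y : A, B x y = B y x)
    (hinv : ∀ x y z : A, B (x * y) z = B x (y * z))
    (hnd : ∀ x : A, (∀ y : A, B x y = 0) → x = 0)
    (hL : ∀ x y z : A, (x * y) * z = x * (y * z) + x * (z * y))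
    (hR : ∀ x y z : A, x * (y * z) = (x * y) * z + (y * x) * z)
    (δ : A →ₗ[K] A) :
    (let Ω : A → A → K := fun x y => B (δ x) y
     (∀ p q s : A × K, centralExtMul Ω (centralExtMul Ω p q) s =
        centralExtMul Ω p (centralExtMul Ω q s) + centralExtMul Ω p (centralExtMul Ω s q)) ∧
     (∀ p q s : A × K, centralExtMul Ω p (centralExtMul Ω q s) =
        centralExtMul Ω (centralExtMul Ω p q) s + centralExtMul Ω (centralExtMul Ω q p) s)) ↔
    (∀ x y : A, δ (x * y) = δ x * y + y * δ x ∧ δ (x * y) = -(x * δ y)) := by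
  dsimp only
  constructor
  · rintro ⟨h1, h2⟩ x y
    have e1 : ∀ x y z : A, B (δ (x * y)) z = B (δ x) (y * z) + B (δ x) (z * y) := by
      intro x y z
      have := congrArg Prod.snd (h1 (x, 0) (y, 0) (z, 0))
      simpa [centralExtMul, Prod.snd] using this
    have e2 : ∀ x y z : A, B (δ x) (y * z) = B (δ (x * y)) z + B (δ (y * x)) z := by
      intro x y z
      have := congrArg Prod.snd (h2 (x, 0) (y, 0) (z, 0))
      simpa [centralExtMul, Prod.snd] using this
    have hA : ∀ x y z : A, B (δ x) (y * z) = B (δ x * y) z := fun x y z =>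
      (hinv (δ x) y z).symm
    have hB : ∀ x y z : A, B (δ x) (z * y) = B (y * δ x) z := by
      intro x y z
      rw [hsymm, hinv, hsymm]
    have key1 : ∀ x y : A, δ (x * y) = δ x * y + y * δ x := by
      intro x y
      have h0 : ∀ z, B (δ (x * y) - (δ x * y + y * δ x)) z = 0 := by
        intro z
        simp only [map_sub, map_add, LinearMap.sub_apply, LinearMap.add_apply]
        rw [← hA, ← hB, e1 x y z]; ring
      exact sub_eq_zero.mp (hnd _ h0)
    have key2 : ∀ x y : A, δ x * y = δ (x * y) + δ (y * x) := by
      intro x y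
      have h0 : ∀ z, B (δ x * y - (δ (x * y) + δ (y * x))) z = 0 := by
        intro z
        simp only [map_sub, map_add, LinearMap.sub_apply, LinearMap.add_apply]
        rw [← e2 x y z, hA]; ring
      exact sub_eq_zero.mp (hnd _ h0)
    have Z : ∀ x y : A, y * δ x + (δ y * x + x * δ y) = 0 := by
      intro x y
      have := key2 x y
      rw [key1 x y, key1 y x] at this
      linear_combination (norm := abel1) -this
    have sym : δ y * x = δ x * y := by
      have h1' := Z x y
      have h2' := Z y x
      linear_combination (norm := abel1) h1' - h2'
    refine ⟨key1 x y, ?_⟩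
    have := Z x y
    rw [sym] at this
    rw [key1 x y]
    linear_combination (norm := abel1) this
  · intro h
    constructor
    · intro p q s
      have hfst : (p.1 * q.1) * s.1 = p.1 * (q.1 * s.1) + p.1 * (s.1 * q.1) :=
        hL p.1 q.1 s.1
      have hsnd : B (δ (p.1 * q.1)) s.1 = B (δ p.1) (q.1 * s.1) + B (δ p.1) (s.1 * q.1) := by
        rw [(h p.1 q.1).1]
        have hA : B (δ p.1) (q.1 * s.1) = B (δ p.1 * q.1) s.1 := (hinv _ _ _).symm
        have hB : B (δ p.1) (s.1 * q.1) = B (q.1 * δ p.1) s.1 := by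
          rw [hsymm, hinv, hsymm]
        simp only [map_add, LinearMap.add_apply, hA, hB]
      simp only [centralExtMul, Prod.mk_add_mk, Prod.mk.injEq]
      exact ⟨hfst, hsnd⟩
    · intro p q s
      have hfst : p.1 * (q.1 * s.1) = (p.1 * q.1) * s.1 + (q.1 * p.1) * s.1 :=
        hR p.1 q.1 s.1
      have hsnd : B (δ p.1) (q.1 * s.1) = B (δ (p.1 * q.1)) s.1 + B (δ (q.1 * p.1)) s.1 := by
        rw [(h p.1 q.1).1, (h q.1 p.1).2]
        have hA : B (δ p.1) (q.1 * s.1) = B (δ p.1 * q.1) s.1 := (hinv _ _ _).symm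
        simp only [map_add, map_neg, LinearMap.add_apply, LinearMap.neg_apply, hA]
        ring
      simp only [centralExtMul, Prod.mk_add_mk, Prod.mk.injEq]
      exact ⟨hfst, hsnd⟩
end

section
/- A two-dimensional algebra generated by a single element e₁ with e₁² = e₂ and all other products zero is a symmetric Zinbiel algebra, and every one-generated symmetric Zinbiel algebra of dimension ≥ 2 over a field of characteristic ≠ 2, 3 is isomorphic to it. -/
/-- The 2-dimensional algebra with basis `e₁, e₂`, `e₁² = e₂` and all other products zero,
realized on `K × K` (coordinates in the basis `e₁, e₂`). -/
def modelOneGenMul {K : Type*} [Field K] (p q : K × K) : K × K :=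
  (0, p.1 * q.1)

theorem one_generated_symmetric_zinbiel {K : Type*} [Field K]
    (h2 : (2 : K) ≠ 0) (h3 : (3 : K) ≠ 0) :
    ((∀ p q s : K × K, modelOneGenMul (modelOneGenMul p q) s =
        modelOneGenMul p (modelOneGenMul q s) + modelOneGenMul p (modelOneGenMul s q)) ∧
     (∀ p q s : K × K, modelOneGenMul p (modelOneGenMul q s) =
        modelOneGenMul (modelOneGenMul p q) s + modelOneGenMul (modelOneGenMul q p) s)) ∧
    (∀ (A : Type) (_ : NonUnitalNonAssocRing A) (_ : Module K A)
        (_ : IsScalarTower K A A) (_ : SMulCommClass K A A),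
      (∀ x y z : A, (x * y) * z = x * (y * z) + x * (z * y)) →
      (∀ x y z : A, x * (y * z) = (x * y) * z + (y * x) * z) →
      (∃ g : A, ∀ p : Submodule K A, g ∈ p → (∀ a b : A, a ∈ p → b ∈ p → a * b ∈ p) → p = ⊤) →
      2 ≤ Module.finrank K A →
      ∃ φ : A ≃ₗ[K] K × K, ∀ a b : A, φ (a * b) = modelOneGenMul (φ a) (φ b)) := by
  constructor
  · constructor <;> intro p q s <;> simp [modelOneGenMul, Prod.ext_iff]
  · intro A _ _ _ _ hL hR hgen hdim
    obtain ⟨g, hg⟩ := hgen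
    -- three-torsion-free
    have h3A : ∀ a : A, a + a + a = 0 → a = 0 := by
      intro a h
      have hs : (3 : K) • a = 0 := by
        rw [show (3 : K) = 1 + 1 + 1 by norm_num, add_smul, add_smul, one_smul, h]
      have := congrArg (fun x => (3 : K)⁻¹ • x) hs
      simpa [smul_smul, inv_mul_cancel₀ h3] using this
    -- cube vanishing
    have cube : ∀ x : A, (x * x) * x = 0 ∧ x * (x * x) = 0 := by
      intro x
      have ha : (x * x) * x = x * (x * x) + x * (x * x) := hL x x x
      have hb : x * (x * x) = (x * x) * x + (x * x) * x := hR x x x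
      set a := (x * x) * x
      set b := x * (x * x)
      have h0 : b + b + b = 0 := by
        calc b + b + b = (b + b + (b + b)) - b := by abel
          _ = (a + a) - b := by rw [← ha]
          _ = b - b := by rw [← hb]
          _ = 0 := sub_self b
      have hb0 : b = 0 := h3A b h0
      constructor
      · rw [ha, hb0, add_zero]
      · exact hb0
    set u := g * g with hu
    have hgu : g * u = 0 := (cube g).2
    have hug : u * g = 0 := (cube g).1
    have huu : u * u = 0 := by
      have h := hR u g g
      simpa [← hu, hug, hgu] using h
    -- product formula
    have prodf : ∀ α β γ δ : K,
        (α • g + β • u) * (γ • g + δ • u) = (α * γ) • u := by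
      intro α β γ δ
      simp [mul_add, add_mul, smul_mul_assoc, mul_smul_comm, hgu, hug, huu, ← hu, smul_smul, mul_comm]
    -- span
    set p := Submodule.span K ({g, u} : Set A) with hp
    have hgp : g ∈ p := Submodule.subset_span (by simp)
    have hup : u ∈ p := Submodule.subset_span (by simp)
    have hclosed : ∀ a b : A, a ∈ p → b ∈ p → a * b ∈ p := by
      intro a b ha hb
      obtain ⟨α, β, rfl⟩ := Submodule.mem_span_pair.mp ha
      obtain ⟨γ, δ, rfl⟩ := Submodule.mem_span_pair.mp hb
      rw [prodf]
      exact p.smul_mem _ hup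
    have htop : p = ⊤ := hg p hgp hclosed
    have hspan : Submodule.span K (Set.range ![g, u]) = ⊤ := by
      have : Set.range ![g, u] = ({g, u} : Set A) := by
        ext x
        simp [Fin.exists_fin_two]
        tauto
      rw [this, ← hp, htop]
    have hle : Module.finrank K A ≤ 2 := by
      simpa using finrank_le_of_span_eq_top hspan
    have hfr : Fintype.card (Fin 2) = Module.finrank K A := by
      simp [le_antisymm hle hdim]
    let b : Module.Basis (Fin 2) K A :=
      basisOfTopLeSpanOfCardEqFinrank ![g, u] hspan.ge hfr
    have hb : ∀ i, b i = ![g, u] i := fun i => by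
      rw [coe_basisOfTopLeSpanOfCardEqFinrank]
    have hb0 : b 0 = g := hb 0
    have hb1 : b 1 = u := hb 1
    refine ⟨b.equivFun.trans (LinearEquiv.finTwoArrow K K), ?_⟩
    intro x y
    have hx : x = (b.repr x 0) • g + (b.repr x 1) • u := by
      conv_lhs => rw [← b.sum_repr x]
      rw [Fin.sum_univ_two, hb0, hb1]
    have hy : y = (b.repr y 0) • g + (b.repr y 1) • u := by
      conv_lhs => rw [← b.sum_repr y]
      rw [Fin.sum_univ_two, hb0, hb1]
    have hxy : x * y = (b.repr x 0 * b.repr y 0) • u := by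
      conv_lhs => rw [hx, hy]
      exact prodf _ _ _ _
    have hru : ∀ i, b.repr u i = if i = 1 then 1 else 0 := by
      intro i
      rw [← hb1, b.repr_self]
      simp [Finsupp.single_apply, eq_comm]
    simp only [LinearEquiv.trans_apply, Module.Basis.equivFun_apply, LinearEquiv.finTwoArrow_apply,
      modelOneGenMul, hxy, map_smul]
    simp [hru, Prod.ext_iff]
end
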